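/- arXiv:2309.17049 — 2 statements merged into one kernel-verified Lean document; each statement's English description precedes it below -/
import Mathlib

section
/- Let $H$ be a hypergraph and $V_1, V_2 \subseteq V(H)$ with $V_1 \cup V_2 = V(H)$ such that $Y = V_1 \cap V_2$ is a $(V_1, V_2)$-separator. Let $W \subseteq Y$, and let $C_1, C_2$ be a weak partition of $Y \setminus W$. Let $H_1 = H[V_1 \setminus W]$ and $H_2 = H[V_2 \setminus W]$. Let $A, B \subseteq V(H)$, and for $i \in \{1,2\}$ set $A_i = (A \cap V(H_i)) \cup C_1$ and $B_i = (B \cap V(H_i)) \cup C_2$, and let $W_i$ be an $(A_i, B_i)$-separator of $H_i$. Then $W_1 \cup W_2 \cup W$ is an $(A,B)$-separator of $H$. -/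
open Finset

open scoped Classical

variable {α : Type*}

structure FinHypergraph (α : Type*) where
  verts : Finset α
  edges : Finset (Finset α)
  edge_sub : ∀ e ∈ edges, e ⊆ verts

namespace FinHypergraph

/-- `U` is a subedge of `H`: it is contained in some hyperedge. -/
def IsSubedge (H : FinHypergraph α) (U : Finset α) : Prop := ∃ e ∈ H.edges, U ⊆ e

/-- `H` is a `(2,d)`-hypergraph: any two distinct edges intersect in at most `d` vertices. -/
def Is2dHypergraph (H : FinHypergraph α) (d : ℕ) : Prop :=
  ∀ e ∈ H.edges, ∀ f ∈ H.edges, e ≠ f → (e ∩ f).card ≤ d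

/-- The induced subhypergraph `H[U]`. -/
noncomputable def induce (H : FinHypergraph α) (U : Finset α) : FinHypergraph α where
  verts := U
  edges := (H.edges.image (· ∩ U)).filter (· ≠ ∅)
  edge_sub := by
    intro e he
    simp only [Finset.mem_filter, Finset.mem_image] at he
    obtain ⟨⟨f, hf, rfl⟩, -⟩ := he
    exact Finset.inter_subset_right

/-- The adjacency graph of a hypergraph: two distinct vertices are adjacent
iff they lie in a common edge. -/
def adjGraph (H : FinHypergraph α) : SimpleGraph α where
  Adj v w := v ≠ w ∧ ∃ e ∈ H.edges, v ∈ e ∧ w ∈ e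
  symm := by constructor; rintro v w ⟨hne, e, he, hv, hw⟩; exact ⟨hne.symm, e, he, hw, hv⟩
  loopless := by constructor; rintro v ⟨hne, -⟩; exact hne rfl

/-- Adjacency in `H` avoiding the vertex set `S` (i.e. adjacency in `H[V(H) \ S]`). -/
def avoidGraph (H : FinHypergraph α) (S : Finset α) : SimpleGraph α where
  Adj v w := v ≠ w ∧ v ∉ S ∧ w ∉ S ∧ ∃ e ∈ H.edges, v ∈ e ∧ w ∈ e
  symm := by constructor; rintro v w ⟨hne, hv, hw, e, he, h1, h2⟩; exact ⟨hne.symm, hw, hv, e, he, h2, h1⟩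
  loopless := by constructor; rintro v ⟨hne, -⟩; exact hne rfl

/-- `S` is an `(A,B)`-separator of `H`: no path of `H[V(H) \ S]` joins
a vertex of `A \ S` to a vertex of `B \ S`. -/
def IsSeparator (H : FinHypergraph α) (A B S : Finset α) : Prop :=
  ∀ a ∈ A, a ∉ S → ∀ b ∈ B, b ∉ S → ¬ (H.avoidGraph S).Reachable a b

/-- `U` has an edge cover of weight at most `k` (edge cover number `ρ(U) ≤ k`). -/
def CoverLE (H : FinHypergraph α) (U : Finset α) (k : ℕ) : Prop :=
  ∃ F : Finset (Finset α), F ⊆ H.edges ∧ U ⊆ F.biUnion id ∧ F.card ≤ k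

/-- `(T, B)` is a tree decomposition of `H`. -/
def IsTreeDecomp (H : FinHypergraph α) {ι : Type*} (T : SimpleGraph ι) (B : ι → Finset α) : Prop :=
  T.IsTree ∧ (∀ u, B u ⊆ H.verts) ∧ (∀ e ∈ H.edges, ∃ u, e ⊆ B u) ∧
  (∀ v ∈ H.verts, (T.induce {u | v ∈ B u}).Connected)

/-- Generalised hypertree width of `H` is at most `k`. -/
def ghwLE (H : FinHypergraph α) (k : ℕ) : Prop :=
  ∃ (ι : Type) (T : SimpleGraph ι) (B : ι → Finset α),
    H.IsTreeDecomp T B ∧ ∀ u, H.CoverLE (B u) k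

/-- Two subedges are incompatible if their union is not a subedge. -/
def Incompatible (H : FinHypergraph α) (X Y : Finset α) : Prop := ¬ H.IsSubedge (X ∪ Y)

/-- `U₁,…,U_a, S₁,…,S_b` form an `(a,b)` subedge hypergrid (shyg). -/
def IsShyg (H : FinHypergraph α) {a b : ℕ} (U : Fin a → Finset α) (S : Fin b → Finset α) : Prop :=
  (∀ i, H.IsSubedge (U i)) ∧ (∀ j, H.IsSubedge (S j)) ∧
  (∀ i i', i ≠ i' → H.Incompatible (U i) (U i')) ∧
  (∀ j j', j ≠ j' → H.Incompatible (S j) (S j')) ∧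
  (∀ i j, H.Incompatible (U i) (S j)) ∧
  (∀ i i', i ≠ i' → Disjoint (U i) (U i')) ∧
  (∀ j i, (S j ∩ U i).Nonempty)

/-- A strong shyg: additionally the `S j` intersect pairwise disjointly inside `⋃ U i`. -/
def IsStrongShyg (H : FinHypergraph α) {a b : ℕ}
    (U : Fin a → Finset α) (S : Fin b → Finset α) : Prop :=
  H.IsShyg U S ∧ ∀ j j', j ≠ j' → S j ∩ S j' ∩ Finset.univ.biUnion U = ∅

/-- `H` has a strong `(a,b)`-shyg. -/
def HasStrongShyg (H : FinHypergraph α) (a b : ℕ) : Prop :=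
  ∃ (U : Fin a → Finset α) (S : Fin b → Finset α), H.IsStrongShyg U S

/-- `ext(C, E')`: the edges of `E'` meeting `C`. -/
noncomputable def ext (E' : Finset (Finset α)) (C : Finset α) : Finset (Finset α) :=
  E'.filter fun e => (e ∩ C).Nonempty

/-- `C` is (the vertex set of) a connected component of `H`. -/
def IsConnComp (H : FinHypergraph α) (C : Finset α) : Prop :=
  ∃ v ∈ H.verts, ∀ w, w ∈ C ↔ w ∈ H.verts ∧ H.adjGraph.Reachable v w

end FinHypergraph

/-- The vertex set of `T_{x,Y}`: the union of all paths of `G` starting at `x`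
whose second vertex belongs to `Y`. -/
def subtreeVerts {V : Type*} (G : SimpleGraph V) (x : V) (Y : Set V) : Set V :=
  {v | v = x ∨ ∃ w : G.Walk x v, w.IsPath ∧ w.getVert 1 ∈ Y ∧ ¬ w.Nil}

/-- The tree `T⁺_{t,Y}`: the restriction of `T` to `s` together with a fresh node `none`
made adjacent to `t`. -/
def plusGraph {ι : Type*} (T : SimpleGraph ι) (s : Set ι) (t : ι) :
    SimpleGraph (Option s) where
  Adj a b :=
    (∃ u v : s, a = some u ∧ b = some v ∧ T.Adj u v) ∨
    (a = none ∧ ∃ v : s, b = some v ∧ (v : ι) = t) ∨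
    (b = none ∧ ∃ u : s, a = some u ∧ (u : ι) = t)
  symm := by
    constructor
    rintro a b (⟨u, v, rfl, rfl, h⟩ | ⟨rfl, v, rfl, hv⟩ | ⟨rfl, u, rfl, hu⟩)
    · exact Or.inl ⟨v, u, rfl, rfl, h.symm⟩
    · exact Or.inr (Or.inr ⟨rfl, v, rfl, hv⟩)
    · exact Or.inr (Or.inl ⟨rfl, u, rfl, hu⟩)
  loopless := by
    constructor
    rintro a (⟨u, v, rfl, h1, h2⟩ | ⟨rfl, v, h, -⟩ | ⟨rfl, u, h, -⟩)
    · obtain rfl : u = v := Option.some_injective _ h1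
      exact T.loopless.irrefl _ h2
    · exact absurd h (by simp)
    · exact absurd h (by simp)

/-- `ξ'(n,k,d)` from the paper. -/
def xi' (k d : ℕ) : ℕ → ℕ
  | 0 => (3*k+1)*d+1
  | n+1 => ((3*k+1)*d)^2 * xi' k d n + 1
theorem composed_separator {α : Type*} (H : FinHypergraph α) (V1 V2 : Finset α)
    (hV1 : V1 ⊆ H.verts) (hV2 : V2 ⊆ H.verts) (hV12 : V1 ∪ V2 = H.verts)
    (hYsep : H.IsSeparator V1 V2 (V1 ∩ V2))
    (W : Finset α) (hW : W ⊆ V1 ∩ V2)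
    (C1 C2 : Finset α) (hdisj : Disjoint C1 C2) (hpart : C1 ∪ C2 = (V1 ∩ V2) \ W)
    (A B : Finset α) (hA : A ⊆ H.verts) (hB : B ⊆ H.verts)
    (W1 W2 : Finset α)
    (hW1 : (H.induce (V1 \ W)).IsSeparator ((A ∩ (V1 \ W)) ∪ C1) ((B ∩ (V1 \ W)) ∪ C2) W1)
    (hW2 : (H.induce (V2 \ W)).IsSeparator ((A ∩ (V2 \ W)) ∪ C1) ((B ∩ (V2 \ W)) ∪ C2) W2) :
    H.IsSeparator A B (W1 ∪ W2 ∪ W) := by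
  classical
  intro a ha haS b hb hbS hab
  set S : Finset α := W1 ∪ W2 ∪ W with hSdef
  -- every edge lies within V1 or V2
  have hedge : ∀ e ∈ H.edges, e ⊆ V1 ∨ e ⊆ V2 := by
    intro e he
    by_contra hc
    push_neg at hc
    obtain ⟨h1, h2⟩ := hc
    obtain ⟨y, hye, hy2⟩ := Finset.not_subset.mp h2
    obtain ⟨x, hxe, hx1⟩ := Finset.not_subset.mp h1
    have hxV : x ∈ V1 ∪ V2 := hV12 ▸ H.edge_sub e he hxe
    have hyV : y ∈ V1 ∪ V2 := hV12 ▸ H.edge_sub e he hye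
    have hx2 : x ∈ V2 := (Finset.mem_union.mp hxV).resolve_left hx1
    have hy1 : y ∈ V1 := (Finset.mem_union.mp hyV).resolve_right hy2
    have hxY : x ∉ V1 ∩ V2 := fun h => hx1 (Finset.mem_inter.mp h).1
    have hyY : y ∉ V1 ∩ V2 := fun h => hy2 (Finset.mem_inter.mp h).2
    have hxy : y ≠ x := by rintro rfl; exact hx1 hy1
    exact hYsep y hy1 hyY x hx2 hxY
      (SimpleGraph.Adj.reachable ⟨hxy, hyY, hxY, e, he, hye, hxe⟩)
  have hW1S : W1 ⊆ S := (Finset.subset_union_left).trans Finset.subset_union_left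
  have hW2S : W2 ⊆ S := (Finset.subset_union_right).trans Finset.subset_union_left
  have hWS : W ⊆ S := Finset.subset_union_right
  set G1 := (H.induce (V1 \ W)).avoidGraph W1 with hG1
  set G2 := (H.induce (V2 \ W)).avoidGraph W2 with hG2
  set A1 : Finset α := (A ∩ (V1 \ W)) ∪ C1 with hA1
  set A2 : Finset α := (A ∩ (V2 \ W)) ∪ C1 with hA2
  set B1 : Finset α := (B ∩ (V1 \ W)) ∪ C2 with hB1
  set B2 : Finset α := (B ∩ (V2 \ W)) ∪ C2 with hB2
  set Φ : α → Prop := fun v =>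
    (v ∈ V1 \ W → ∃ a1 ∈ A1, a1 ∉ W1 ∧ G1.Reachable a1 v) ∧
    (v ∈ V2 \ W → ∃ a2 ∈ A2, a2 ∉ W2 ∧ G2.Reachable a2 v) with hΦ
  -- adjacency within an edge contained in V1 gives adjacency in G1
  have hadj1 : ∀ v w e, e ∈ H.edges → e ⊆ V1 → v ∈ e → w ∈ e → v ≠ w →
      v ∉ S → w ∉ S → G1.Adj v w := by
    intro v w e he heV1 hve hwe hvw hvS hwS
    have hvW : v ∉ W := fun h => hvS (hWS h)
    have hwW : w ∉ W := fun h => hwS (hWS h)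
    have hv : v ∈ e ∩ (V1 \ W) :=
      Finset.mem_inter.mpr ⟨hve, Finset.mem_sdiff.mpr ⟨heV1 hve, hvW⟩⟩
    have hw : w ∈ e ∩ (V1 \ W) :=
      Finset.mem_inter.mpr ⟨hwe, Finset.mem_sdiff.mpr ⟨heV1 hwe, hwW⟩⟩
    refine ⟨hvw, fun h => hvS (hW1S h), fun h => hwS (hW1S h),
      e ∩ (V1 \ W), ?_, hv, hw⟩
    simp only [FinHypergraph.induce, Finset.mem_filter, Finset.mem_image]
    exact ⟨⟨e, he, rfl⟩, Finset.ne_empty_of_mem hv⟩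
  have hadj2 : ∀ v w e, e ∈ H.edges → e ⊆ V2 → v ∈ e → w ∈ e → v ≠ w →
      v ∉ S → w ∉ S → G2.Adj v w := by
    intro v w e he heV2 hve hwe hvw hvS hwS
    have hvW : v ∉ W := fun h => hvS (hWS h)
    have hwW : w ∉ W := fun h => hwS (hWS h)
    have hv : v ∈ e ∩ (V2 \ W) :=
      Finset.mem_inter.mpr ⟨hve, Finset.mem_sdiff.mpr ⟨heV2 hve, hvW⟩⟩
    have hw : w ∈ e ∩ (V2 \ W) :=
      Finset.mem_inter.mpr ⟨hwe, Finset.mem_sdiff.mpr ⟨heV2 hwe, hwW⟩⟩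
    refine ⟨hvw, fun h => hvS (hW2S h), fun h => hwS (hW2S h),
      e ∩ (V2 \ W), ?_, hv, hw⟩
    simp only [FinHypergraph.induce, Finset.mem_filter, Finset.mem_image]
    exact ⟨⟨e, he, rfl⟩, Finset.ne_empty_of_mem hv⟩
  -- the step lemma
  have hstep : ∀ v w, (H.avoidGraph S).Adj v w → Φ v → Φ w := by
    intro v w hadj hv
    obtain ⟨hvw, hvS, hwS, e, he, hve, hwe⟩ := hadj
    have hvW : v ∉ W := fun h => hvS (hWS h)
    have hwW : w ∉ W := fun h => hwS (hWS h)
    have hwW1 : w ∉ W1 := fun h => hwS (hW1S h)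
    have hwW2 : w ∉ W2 := fun h => hwS (hW2S h)
    rcases hedge e he with heV1 | heV2
    · -- e ⊆ V1 : both v,w ∈ V1 \ W
      have hv1 : v ∈ V1 \ W := Finset.mem_sdiff.mpr ⟨heV1 hve, hvW⟩
      have hw1 : w ∈ V1 \ W := Finset.mem_sdiff.mpr ⟨heV1 hwe, hwW⟩
      obtain ⟨a1, ha1, ha1W, hr⟩ := hv.1 hv1
      have hr' : G1.Reachable a1 w := hr.trans
        (SimpleGraph.Adj.reachable (hadj1 v w e he heV1 hve hwe hvw hvS hwS))
      refine ⟨fun _ => ⟨a1, ha1, ha1W, hr'⟩, ?_⟩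
      intro hw2
      have hwC : w ∈ C1 ∪ C2 := by
        rw [hpart]
        exact Finset.mem_sdiff.mpr
          ⟨Finset.mem_inter.mpr ⟨(Finset.mem_sdiff.mp hw1).1, (Finset.mem_sdiff.mp hw2).1⟩, hwW⟩
      rcases Finset.mem_union.mp hwC with hwC1 | hwC2
      · exact ⟨w, Finset.mem_union_right _ hwC1, hwW2, SimpleGraph.Reachable.refl w⟩
      · exact absurd hr' (hW1 a1 ha1 ha1W w (Finset.mem_union_right _ hwC2) hwW1)
    · -- e ⊆ V2
      have hv2 : v ∈ V2 \ W := Finset.mem_sdiff.mpr ⟨heV2 hve, hvW⟩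
      have hw2 : w ∈ V2 \ W := Finset.mem_sdiff.mpr ⟨heV2 hwe, hwW⟩
      obtain ⟨a2, ha2, ha2W, hr⟩ := hv.2 hv2
      have hr' : G2.Reachable a2 w := hr.trans
        (SimpleGraph.Adj.reachable (hadj2 v w e he heV2 hve hwe hvw hvS hwS))
      refine ⟨?_, fun _ => ⟨a2, ha2, ha2W, hr'⟩⟩
      intro hw1
      have hwC : w ∈ C1 ∪ C2 := by
        rw [hpart]
        exact Finset.mem_sdiff.mpr
          ⟨Finset.mem_inter.mpr ⟨(Finset.mem_sdiff.mp hw1).1, (Finset.mem_sdiff.mp hw2).1⟩, hwW⟩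
      rcases Finset.mem_union.mp hwC with hwC1 | hwC2
      · exact ⟨w, Finset.mem_union_right _ hwC1, hwW1, SimpleGraph.Reachable.refl w⟩
      · exact absurd hr' (hW2 a2 ha2 ha2W w (Finset.mem_union_right _ hwC2) hwW2)
  -- transport Φ along walks
  have hwalk : ∀ u v, (H.avoidGraph S).Walk u v → Φ u → Φ v := by
    intro u v p
    induction p with
    | nil => exact id
    | cons h _ ih => intro hu; exact ih (hstep _ _ h hu)
  -- base case
  have haW : a ∉ W := fun h => haS (hWS h)
  have haW1 : a ∉ W1 := fun h => haS (hW1S h)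
  have haW2 : a ∉ W2 := fun h => haS (hW2S h)
  have hΦa : Φ a := by
    constructor
    · intro ha1
      exact ⟨a, Finset.mem_union_left _ (Finset.mem_inter.mpr ⟨ha, ha1⟩), haW1,
        SimpleGraph.Reachable.refl a⟩
    · intro ha2
      exact ⟨a, Finset.mem_union_left _ (Finset.mem_inter.mpr ⟨ha, ha2⟩), haW2,
        SimpleGraph.Reachable.refl a⟩
  have hΦb : Φ b := hwalk a b hab.some hΦa
  -- conclude
  have hbW : b ∉ W := fun h => hbS (hWS h)
  have hbW1 : b ∉ W1 := fun h => hbS (hW1S h)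
  have hbW2 : b ∉ W2 := fun h => hbS (hW2S h)
  have hbV : b ∈ V1 ∪ V2 := hV12 ▸ hB hb
  rcases Finset.mem_union.mp hbV with hb1 | hb2
  · obtain ⟨a1, ha1, ha1W, hr⟩ := hΦb.1 (Finset.mem_sdiff.mpr ⟨hb1, hbW⟩)
    exact hW1 a1 ha1 ha1W b
      (Finset.mem_union_left _ (Finset.mem_inter.mpr ⟨hb, Finset.mem_sdiff.mpr ⟨hb1, hbW⟩⟩))
      hbW1 hr
  · obtain ⟨a2, ha2, ha2W, hr⟩ := hΦb.2 (Finset.mem_sdiff.mpr ⟨hb2, hbW⟩)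
    exact hW2 a2 ha2 ha2W b
      (Finset.mem_union_left _ (Finset.mem_inter.mpr ⟨hb, Finset.mem_sdiff.mpr ⟨hb2, hbW⟩⟩))
      hbW2 hr
end

section
/- Let $T$ be a tree with at least three vertices. Then there exists a non-leaf vertex $x \in V(T)$ and a partition of its neighbourhood $N(x)$ into sets $Y_1, Y_2$ such that for each $i \in \{1,2\}$, the subtree $T_{x,Y_i}$ (the union of all paths of $T$ starting at $x$ whose second vertex lies in $Y_i$) has at most $\frac{3}{4}|V(T)|$ vertices. -/
open Finset

open scoped Classical

variable {α : Type*}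

structure Hypergraph' (α : Type*) where
  verts : Finset α
  edges : Finset (Finset α)
  edge_sub : ∀ e ∈ edges, e ⊆ verts

namespace Hypergraph'

/-- `U` is a subedge of `H`: it is contained in some hyperedge. -/
def IsSubedge (H : Hypergraph' α) (U : Finset α) : Prop := ∃ e ∈ H.edges, U ⊆ e

/-- `H` is a `(2,d)`-hypergraph: any two distinct edges intersect in at most `d` vertices. -/
def Is2dHypergraph (H : Hypergraph' α) (d : ℕ) : Prop :=
  ∀ e ∈ H.edges, ∀ f ∈ H.edges, e ≠ f → (e ∩ f).card ≤ d

/-- The induced subhypergraph `H[U]`. -/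
noncomputable def induce (H : Hypergraph' α) (U : Finset α) : Hypergraph' α where
  verts := U
  edges := (H.edges.image (· ∩ U)).filter (· ≠ ∅)
  edge_sub := by
    intro e he
    simp only [Finset.mem_filter, Finset.mem_image] at he
    obtain ⟨⟨f, hf, rfl⟩, -⟩ := he
    exact Finset.inter_subset_right

/-- The adjacency graph of a hypergraph: two distinct vertices are adjacent
iff they lie in a common edge. -/
def adjGraph (H : Hypergraph' α) : SimpleGraph α where
  Adj v w := v ≠ w ∧ ∃ e ∈ H.edges, v ∈ e ∧ w ∈ e
  symm := by constructor; rintro v w ⟨hne, e, he, hv, hw⟩; exact ⟨hne.symm, e, he, hw, hv⟩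
  loopless := by constructor; rintro v ⟨hne, -⟩; exact hne rfl

/-- Adjacency in `H` avoiding the vertex set `S` (i.e. adjacency in `H[V(H) \ S]`). -/
def avoidGraph (H : Hypergraph' α) (S : Finset α) : SimpleGraph α where
  Adj v w := v ≠ w ∧ v ∉ S ∧ w ∉ S ∧ ∃ e ∈ H.edges, v ∈ e ∧ w ∈ e
  symm := by constructor; rintro v w ⟨hne, hv, hw, e, he, h1, h2⟩; exact ⟨hne.symm, hw, hv, e, he, h2, h1⟩
  loopless := by constructor; rintro v ⟨hne, -⟩; exact hne rfl

/-- `S` is an `(A,B)`-separator of `H`: no path of `H[V(H) \ S]` joins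
a vertex of `A \ S` to a vertex of `B \ S`. -/
def IsSeparator (H : Hypergraph' α) (A B S : Finset α) : Prop :=
  ∀ a ∈ A, a ∉ S → ∀ b ∈ B, b ∉ S → ¬ (H.avoidGraph S).Reachable a b

/-- `U` has an edge cover of weight at most `k` (edge cover number `ρ(U) ≤ k`). -/
def CoverLE (H : Hypergraph' α) (U : Finset α) (k : ℕ) : Prop :=
  ∃ F : Finset (Finset α), F ⊆ H.edges ∧ U ⊆ F.biUnion id ∧ F.card ≤ k

/-- `(T, B)` is a tree decomposition of `H`. -/
def IsTreeDecomp (H : Hypergraph' α) {ι : Type*} (T : SimpleGraph ι) (B : ι → Finset α) : Prop :=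
  T.IsTree ∧ (∀ u, B u ⊆ H.verts) ∧ (∀ e ∈ H.edges, ∃ u, e ⊆ B u) ∧
  (∀ v ∈ H.verts, (T.induce {u | v ∈ B u}).Connected)

/-- Generalised hypertree width of `H` is at most `k`. -/
def ghwLE (H : Hypergraph' α) (k : ℕ) : Prop :=
  ∃ (ι : Type) (T : SimpleGraph ι) (B : ι → Finset α),
    H.IsTreeDecomp T B ∧ ∀ u, H.CoverLE (B u) k

/-- Two subedges are incompatible if their union is not a subedge. -/
def Incompatible (H : Hypergraph' α) (X Y : Finset α) : Prop := ¬ H.IsSubedge (X ∪ Y)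

/-- `U₁,…,U_a, S₁,…,S_b` form an `(a,b)` subedge hypergrid (shyg). -/
def IsShyg (H : Hypergraph' α) {a b : ℕ} (U : Fin a → Finset α) (S : Fin b → Finset α) : Prop :=
  (∀ i, H.IsSubedge (U i)) ∧ (∀ j, H.IsSubedge (S j)) ∧
  (∀ i i', i ≠ i' → H.Incompatible (U i) (U i')) ∧
  (∀ j j', j ≠ j' → H.Incompatible (S j) (S j')) ∧
  (∀ i j, H.Incompatible (U i) (S j)) ∧
  (∀ i i', i ≠ i' → Disjoint (U i) (U i')) ∧
  (∀ j i, (S j ∩ U i).Nonempty)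

/-- A strong shyg: additionally the `S j` intersect pairwise disjointly inside `⋃ U i`. -/
def IsStrongShyg (H : Hypergraph' α) {a b : ℕ}
    (U : Fin a → Finset α) (S : Fin b → Finset α) : Prop :=
  H.IsShyg U S ∧ ∀ j j', j ≠ j' → S j ∩ S j' ∩ Finset.univ.biUnion U = ∅

/-- `H` has a strong `(a,b)`-shyg. -/
def HasStrongShyg (H : Hypergraph' α) (a b : ℕ) : Prop :=
  ∃ (U : Fin a → Finset α) (S : Fin b → Finset α), H.IsStrongShyg U S

/-- `ext(C, E')`: the edges of `E'` meeting `C`. -/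
noncomputable def ext (E' : Finset (Finset α)) (C : Finset α) : Finset (Finset α) :=
  E'.filter fun e => (e ∩ C).Nonempty

/-- `C` is (the vertex set of) a connected component of `H`. -/
def IsConnComp (H : Hypergraph' α) (C : Finset α) : Prop :=
  ∃ v ∈ H.verts, ∀ w, w ∈ C ↔ w ∈ H.verts ∧ H.adjGraph.Reachable v w

end Hypergraph'

set_option linter.unusedSectionVars false

namespace TreeSplitAux

open SimpleGraph

variable {V : Type*} [Fintype V] {T : SimpleGraph V} {x y z v : V}

/-- Vertices reachable from `y` by a walk avoiding `x`. -/
def brk (T : SimpleGraph V) (x y : V) : Set V := {v | ∃ p : T.Walk y v, x ∉ p.support}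

lemma self_mem_brk (h : T.Adj x y) : y ∈ brk T x y :=
  ⟨SimpleGraph.Walk.nil, by simp [h.ne]⟩

lemma not_mem_brk : x ∉ brk T x y := fun ⟨p, hp⟩ => hp p.end_mem_support

lemma getVert_one_eq (hT : T.IsTree) (h : T.Adj x y) (hv : v ∈ brk T x y)
    {q : T.Walk x v} (hq : q.IsPath) : q.getVert 1 = y ∧ y ∈ q.support := by
  obtain ⟨p, hp⟩ := hv
  set r : T.Walk y v := (p.toPath : T.Walk y v) with hr
  have hrp : r.IsPath := p.toPath.2
  have hxr : x ∉ r.support := fun hx => hp (SimpleGraph.Walk.support_toPath_subset p hx)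
  have hw : (SimpleGraph.Walk.cons h r).IsPath :=
    (SimpleGraph.Walk.cons_isPath_iff h r).2 ⟨hrp, hxr⟩
  have hqe : q = SimpleGraph.Walk.cons h r := (hT.existsUnique_path x v).unique hq hw
  subst hqe
  constructor
  · rw [SimpleGraph.Walk.getVert_cons_succ, SimpleGraph.Walk.getVert_zero]
  · rw [SimpleGraph.Walk.support_cons]
    exact List.mem_cons_of_mem _ r.start_mem_support

lemma brk_disjoint (hT : T.IsTree) (hy : T.Adj x y) (hz : T.Adj x z) (hne : y ≠ z) :
    brk T x y ∩ brk T x z = ∅ := by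
  rw [Set.eq_empty_iff_forall_notMem]
  rintro v ⟨h1, h2⟩
  obtain ⟨q, hq, -⟩ := hT.existsUnique_path x v
  have e1 := (getVert_one_eq hT hy h1 hq).1
  have e2 := (getVert_one_eq hT hz h2 hq).1
  exact hne (e1 ▸ e2 ▸ rfl)

lemma brk_compl (hT : T.IsTree) (h : T.Adj x y) : brk T y x = (brk T x y)ᶜ := by
  ext v
  constructor
  · intro hv hv'
    obtain ⟨q0, hq0⟩ := hv
    have hq : (q0.toPath : T.Walk x v).IsPath := q0.toPath.2
    have hyq : y ∉ (q0.toPath : T.Walk x v).support :=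
      fun hy => hq0 (SimpleGraph.Walk.support_toPath_subset q0 hy)
    exact hyq (getVert_one_eq hT h hv' hq).2
  · intro hv
    obtain ⟨q, hq, -⟩ := hT.existsUnique_path x v
    by_cases hy : y ∈ q.support
    · exfalso
      apply hv
      refine ⟨q.dropUntil y hy, ?_⟩
      intro hx
      have hspec := q.take_spec hy
      have hnodup : q.support.Nodup := hq.2
      rw [← hspec, SimpleGraph.Walk.support_append] at hnodup
      have hdisj := (List.nodup_append.1 hnodup).2.2
      have hx1 : x ∈ (q.takeUntil y hy).support := SimpleGraph.Walk.start_mem_support _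
      have hx2 : x ∈ (q.dropUntil y hy).support.tail := by
        have := SimpleGraph.Walk.support_eq_cons (q.dropUntil y hy)
        rw [this] at hx
        rcases List.mem_cons.1 hx with hx | hx
        · exact absurd hx h.ne
        · exact hx
      exact hdisj x hx1 x hx2 rfl
    · exact ⟨q, hy⟩

lemma brk_cover (hT : T.IsTree) (hv : v ≠ x) : ∃ y, T.Adj x y ∧ v ∈ brk T x y := by
  obtain ⟨q, hq, -⟩ := hT.existsUnique_path x v
  cases q with
  | nil => exact absurd rfl hv
  | cons h p =>
    rw [SimpleGraph.Walk.cons_isPath_iff] at hq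
    exact ⟨_, h, p, hq.2⟩

lemma subtree_eq (hT : T.IsTree) {Y : Set V} (hY : Y ⊆ T.neighborSet x) :
    subtreeVerts T x Y = {x} ∪ ⋃ y ∈ Y, brk T x y := by
  ext v
  simp only [subtreeVerts, Set.mem_setOf_eq, Set.mem_union, Set.mem_singleton_iff,
    Set.mem_iUnion]
  constructor
  · rintro (rfl | ⟨w, hw, h1, hn⟩)
    · exact Or.inl rfl
    · cases w with
      | nil => simp at hn
      | cons h p =>
        rw [SimpleGraph.Walk.cons_isPath_iff] at hw
        rw [SimpleGraph.Walk.getVert_cons_succ, SimpleGraph.Walk.getVert_zero] at h1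
        exact Or.inr ⟨_, h1, p, hw.2⟩
  · rintro (rfl | ⟨y, hy, p, hp⟩)
    · exact Or.inl rfl
    · have hadj : T.Adj x y := hY hy
      have hxr : x ∉ (p.toPath : T.Walk y v).support :=
        fun hx => hp (SimpleGraph.Walk.support_toPath_subset p hx)
      refine Or.inr ⟨SimpleGraph.Walk.cons hadj (p.toPath : T.Walk y v),
        (SimpleGraph.Walk.cons_isPath_iff hadj _).2 ⟨(p.toPath).2, hxr⟩, ?_, by simp⟩
      rw [SimpleGraph.Walk.getVert_cons_succ, SimpleGraph.Walk.getVert_zero]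
      exact hy

/-- branch size -/
noncomputable def m (T : SimpleGraph V) (x y : V) : ℕ := (brk T x y).ncard

lemma m_pos (h : T.Adj x y) : 1 ≤ m T x y :=
  (Set.ncard_pos (Set.toFinite _)).2 ⟨y, self_mem_brk h⟩

lemma m_symm (hT : T.IsTree) (h : T.Adj x y) : m T x y + m T y x = Fintype.card V := by
  rw [m, m, brk_compl hT h, Set.ncard_add_ncard_compl, Nat.card_eq_fintype_card]

lemma subtree_ncard (hT : T.IsTree) {B : Finset V} (hB : ∀ y ∈ B, T.Adj x y) :
    (subtreeVerts T x ↑B).ncard = 1 + ∑ y ∈ B, m T x y := by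
  have hY : (↑B : Set V) ⊆ T.neighborSet x := fun y hy => hB y hy
  rw [subtree_eq hT hY]
  have heq : ({x} ∪ ⋃ y ∈ (↑B : Set V), brk T x y)
      = ↑(insert x (B.biUnion fun y => (brk T x y).toFinset)) := by
    ext v
    simp [Set.mem_toFinset]
  rw [heq, Set.ncard_coe_finset]
  rw [Finset.card_insert_of_notMem, Finset.card_biUnion]
  · have hc : ∀ y ∈ B, (brk T x y).toFinset.card = m T x y := fun y _ =>
      (Set.ncard_eq_toFinset_card' _).symm
    rw [Finset.sum_congr rfl hc]
    exact add_comm _ _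
  · intro a ha b hb hab
    rw [Function.onFun, Finset.disjoint_left]
    intro c hc hc'
    rw [Set.mem_toFinset] at hc hc'
    have := brk_disjoint hT (hB a ha) (hB b hb) hab
    rw [Set.eq_empty_iff_forall_notMem] at this
    exact this c ⟨hc, hc'⟩
  · intro hmem
    rw [Finset.mem_biUnion] at hmem
    obtain ⟨y, -, hx⟩ := hmem
    exact not_mem_brk (Set.mem_toFinset.1 hx)

lemma total (hT : T.IsTree) (x : V) :
    1 + ∑ y ∈ T.neighborFinset x, m T x y = Fintype.card V := by
  have hB : ∀ y ∈ T.neighborFinset x, T.Adj x y := fun y hy =>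
    (SimpleGraph.mem_neighborFinset _ _ _).1 hy
  have h1 := subtree_ncard (x := x) hT hB
  have h2 : subtreeVerts T x ↑(T.neighborFinset x) = Set.univ := by
    rw [subtree_eq hT (by simp [SimpleGraph.neighborFinset_def])]
    ext v
    simp only [Set.mem_union, Set.mem_singleton_iff, Set.mem_iUnion, Set.mem_univ, iff_true]
    by_cases hv : v = x
    · exact Or.inl hv
    · obtain ⟨y, hadj, hvy⟩ := brk_cover hT hv
      exact Or.inr ⟨y, by simp [SimpleGraph.neighborFinset_def, hadj], hvy⟩
  rw [h2] at h1
  rw [Set.ncard_univ, Nat.card_eq_fintype_card] at h1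
  omega

lemma descent (hT : T.IsTree) (hxy : T.Adj x y) (hyz : T.Adj y z) (hzx : z ≠ x) :
    m T y z + 1 ≤ m T x y := by
  have hsub : brk T y z ⊆ brk T x y \ {y} := by
    intro v hv
    constructor
    · have hcompl : brk T x y = (brk T y x)ᶜ := brk_compl hT hxy.symm
      rw [hcompl]
      intro hv'
      have hdisj := brk_disjoint hT hyz hxy.symm hzx
      rw [Set.eq_empty_iff_forall_notMem] at hdisj
      exact hdisj v ⟨hv, hv'⟩
    · rintro rfl
      exact not_mem_brk hv
  have h1 : m T y z ≤ (brk T x y \ {y}).ncard :=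
    Set.ncard_le_ncard hsub (Set.toFinite _)
  have h2 : (brk T x y \ {y}).ncard = m T x y - 1 :=
    Set.ncard_diff_singleton_of_mem (self_mem_brk hxy)
  have h3 := m_pos hxy
  omega

lemma exists_centroid (hT : T.IsTree) (hn : 3 ≤ Fintype.card V) :
    ∃ x : V, ∀ y ∈ T.neighborFinset x, 2 * m T x y ≤ Fintype.card V := by
  have : Nonempty V := Fintype.card_pos_iff.1 (by omega)
  obtain ⟨x, -, hmin⟩ := Finset.exists_min_image Finset.univ
    (fun x => (T.neighborFinset x).sup (m T x)) Finset.univ_nonempty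
  refine ⟨x, ?_⟩
  by_contra hcon
  push_neg at hcon
  obtain ⟨y, hy, hybig⟩ := hcon
  have hadj : T.Adj x y := (SimpleGraph.mem_neighborFinset _ _ _).1 hy
  have hle : m T x y ≤ (T.neighborFinset x).sup (m T x) := Finset.le_sup hy
  have hsymm := m_symm hT hadj
  have hsup : (T.neighborFinset y).sup (m T y) < (T.neighborFinset x).sup (m T x) := by
    rw [Finset.sup_lt_iff (show ⊥ < (T.neighborFinset x).sup (m T x) from
      lt_of_lt_of_le (m_pos hadj) hle)]
    intro z hz
    have hadj' : T.Adj y z := (SimpleGraph.mem_neighborFinset _ _ _).1 hz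
    by_cases hzx : z = x
    · subst hzx
      exact lt_of_lt_of_le (by omega) hle
    · have := descent hT hadj hadj' hzx
      exact lt_of_lt_of_le (by omega) hle
  exact absurd (hmin y (Finset.mem_univ y)) (not_le.2 hsup)

lemma greedy {N : Finset V} {s : V → ℕ} {n : ℕ} (h3 : 3 ≤ n)
    (htot : 1 + ∑ y ∈ N, s y = n) (hhalf : ∀ y ∈ N, 2 * s y ≤ n)
    (hpos : ∀ y ∈ N, 1 ≤ s y) (hcard : 2 ≤ N.card) :
    ∃ B ⊆ N, n ≤ 4 * ∑ y ∈ B, s y ∧ 4 * ∑ y ∈ B, s y ≤ 3 * n - 4 := by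
  set P := N.powerset.filter (fun B => n ≤ 4 * ∑ y ∈ B, s y) with hP
  have hNP : N ∈ P := by
    simp only [hP, Finset.mem_filter, Finset.mem_powerset]
    exact ⟨Finset.Subset.refl N, by omega⟩
  obtain ⟨B, hBP, hmin⟩ := Finset.exists_min_image P (fun B => ∑ y ∈ B, s y) ⟨N, hNP⟩
  simp only [hP, Finset.mem_filter, Finset.mem_powerset] at hBP
  obtain ⟨hBN, hBge⟩ := hBP
  have hBne : B.Nonempty := by
    rcases B.eq_empty_or_nonempty with rfl | h
    · simp at hBge; omega
    · exact h
  obtain ⟨y, hy⟩ := hBne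
  have hyN := hBN hy
  have hsy := hpos y hyN
  have hsum_erase : ∑ z ∈ B.erase y, s z + s y = ∑ z ∈ B, s z := Finset.sum_erase_add B s hy
  refine ⟨B, hBN, hBge, ?_⟩
  by_cases hbig : n ≤ 4 * s y
  · have h1 : ({y} : Finset V) ∈ P := by
      simp only [hP, Finset.mem_filter, Finset.mem_powerset]
      exact ⟨Finset.singleton_subset_iff.2 hyN, by simpa using hbig⟩
    have h2 := hmin _ h1
    simp only [Finset.sum_singleton] at h2
    obtain ⟨y', hy'N, hy'ne⟩ := Finset.exists_mem_ne (s := N) (by omega) y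
    have hsub : ({y, y'} : Finset V) ⊆ N := by
      intro a ha
      simp only [Finset.mem_insert, Finset.mem_singleton] at ha
      rcases ha with rfl | rfl
      exacts [hyN, hy'N]
    have hpair : s y + s y' ≤ ∑ z ∈ N, s z := by
      calc s y + s y' = ∑ z ∈ ({y, y'} : Finset V), s z := (Finset.sum_pair hy'ne.symm).symm
        _ ≤ ∑ z ∈ N, s z := Finset.sum_le_sum_of_subset hsub
    have hh := hhalf y hyN
    have hp' := hpos y' hy'N
    omega
  · have hlt : ¬ n ≤ 4 * ∑ z ∈ B.erase y, s z := by
      intro hle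
      have hmem : B.erase y ∈ P := by
        simp only [hP, Finset.mem_filter, Finset.mem_powerset]
        exact ⟨(Finset.erase_subset _ _).trans hBN, hle⟩
      have := hmin _ hmem
      omega
    omega

end TreeSplitAux

theorem tree_balanced_split {V : Type*} [Fintype V] (T : SimpleGraph V)
    (hT : T.IsTree) (hcard : 3 ≤ Fintype.card V) :
    ∃ x : V, 2 ≤ (T.neighborSet x).ncard ∧
      ∃ Y1 Y2 : Set V, Y1 ∪ Y2 = T.neighborSet x ∧ Y1 ∩ Y2 = ∅ ∧
        4 * (subtreeVerts T x Y1).ncard ≤ 3 * Fintype.card V ∧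
        4 * (subtreeVerts T x Y2).ncard ≤ 3 * Fintype.card V := by
  classical
  obtain ⟨x, hbal⟩ := TreeSplitAux.exists_centroid hT hcard
  have htot := TreeSplitAux.total hT x
  have hadjN : ∀ y ∈ T.neighborFinset x, T.Adj x y := fun y hy =>
    (SimpleGraph.mem_neighborFinset _ _ _).1 hy
  have hpos : ∀ y ∈ T.neighborFinset x, 1 ≤ TreeSplitAux.m T x y := fun y hy =>
    TreeSplitAux.m_pos (hadjN y hy)
  have hdeg : 2 ≤ (T.neighborFinset x).card := by
    have hne : (T.neighborFinset x).Nonempty := by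
      obtain ⟨v, hvx⟩ := Fintype.exists_ne_of_one_lt_card (by omega) x
      obtain ⟨y, hadj, -⟩ := TreeSplitAux.brk_cover hT hvx
      exact ⟨y, (SimpleGraph.mem_neighborFinset _ _ _).2 hadj⟩
    by_contra hlt
    push_neg at hlt
    have h1 : (T.neighborFinset x).card = 1 := by
      have := Finset.card_pos.2 hne; omega
    obtain ⟨y, hy⟩ := Finset.card_eq_one.1 h1
    rw [hy, Finset.sum_singleton] at htot
    have := hbal y (by rw [hy]; exact Finset.mem_singleton_self y)
    omega
  obtain ⟨B, hBN, hlow, hhigh⟩ := TreeSplitAux.greedy hcard htot hbal hpos hdeg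
  have hc1 := TreeSplitAux.subtree_ncard (x := x) hT (fun y hy => hadjN y (hBN hy))
  have hc2 := TreeSplitAux.subtree_ncard (x := x) hT
    (B := T.neighborFinset x \ B) (fun y hy => hadjN y (Finset.mem_sdiff.1 hy).1)
  have hsd : ∑ y ∈ T.neighborFinset x \ B, TreeSplitAux.m T x y
      + ∑ y ∈ B, TreeSplitAux.m T x y = ∑ y ∈ T.neighborFinset x, TreeSplitAux.m T x y :=
    Finset.sum_sdiff hBN
  refine ⟨x, ?_, ↑B, ↑(T.neighborFinset x \ B), ?_, ?_, ?_, ?_⟩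
  · have hns : T.neighborSet x = ↑(T.neighborFinset x) := by
      simp [SimpleGraph.neighborFinset_def]
    rw [hns, Set.ncard_coe_finset]
    exact hdeg
  · rw [Finset.coe_sdiff, Set.union_diff_cancel (Finset.coe_subset.2 hBN)]
    simp [SimpleGraph.neighborFinset_def]
  · rw [Finset.coe_sdiff]
    ext v
    simp only [Set.mem_inter_iff, Set.mem_diff, Set.mem_empty_iff_false, iff_false]
    tauto
  · rw [hc1]; omega
  · rw [hc2]; omega
end
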